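/- arXiv:2603.06776 — 4 statements merged into one kernel-verified Lean document; each statement's English description precedes it below -/
import Mathlib

section
/- Mate reduction of the norm square: In the norm square setup, the following two equations are equivalent. (E1) The norm square commutes: BC_*[α] ∘ (F_X whiskered on the left with Nm_f) ∘ BC_![α] = Nm_{df} whiskered with F_Y on the right, as natural transformations df_! ∘ F_Y ⟶ df_* ∘ F_Y. (E2) The wrong-way-counit square commutes: (F_Y whiskered on the left with ν) ∘ (α⁻¹ whiskered with f_! on the right) ∘ (df* whiskered on the left with BC_![α]) = dν whiskered with F_Y on the right, as natural transformations df* ∘ df_! ∘ F_Y ⟶ F_Y. -/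
/-!
Both norm maps are transposes of the wrong-way counits, along `f* ⊣ f_*` and `df* ⊣ df_*`
respectively. Transposition is compatible with the Beck–Chevalley maps: composing the
`f`-transpose of `φ` with `BC_*[α]` gives the `df`-transpose of `α⁻¹ ≫ F_Y φ`, and precomposing
with `BC_![α]` commutes with transposition. So the two sides of the norm square are the
`df`-transposes of the two sides of the wrong-way-counit square, and transposition is bijective.
-/

open CategoryTheory

/-- The Beck–Chevalley transformation of left adjoints associated to a commuting
square `α : fs ⋙ hs ≅ gs ⋙ is`, where `f_! ⊣ f*` and `i_! ⊣ i*`. -/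
def bcL {C D E F : Type*} [Category C] [Category D] [Category E] [Category F]
    {gs : C ⥤ D} {fs : C ⥤ E} {is : D ⥤ F} {hs : E ⥤ F}
    {fShriek : E ⥤ C} {iShriek : F ⥤ D}
    (adjF : fShriek ⊣ fs) (adjI : iShriek ⊣ is)
    (α : fs ⋙ hs ≅ gs ⋙ is) : hs ⋙ iShriek ⟶ fShriek ⋙ gs :=
  Functor.whiskerRight adjF.unit (hs ⋙ iShriek) ≫
    Functor.whiskerRight (Functor.whiskerLeft fShriek α.hom) iShriek ≫
    Functor.whiskerLeft (fShriek ⋙ gs) adjI.counit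

/-- The Beck–Chevalley transformation of right adjoints associated to a commuting
square `α : fs ⋙ hs ≅ gs ⋙ is`, where `f* ⊣ f_*` and `i* ⊣ i_*`. -/
def bcR {C D E F : Type*} [Category C] [Category D] [Category E] [Category F]
    {gs : C ⥤ D} {fs : C ⥤ E} {is : D ⥤ F} {hs : E ⥤ F}
    {fStar : E ⥤ C} {iStar : F ⥤ D}
    (adjF : fs ⊣ fStar) (adjI : is ⊣ iStar)
    (α : fs ⋙ hs ≅ gs ⋙ is) : fStar ⋙ gs ⟶ hs ⋙ iStar :=
  Functor.whiskerLeft (fStar ⋙ gs) adjI.unit ≫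
    Functor.whiskerRight (Functor.whiskerLeft fStar α.inv) iStar ≫
    Functor.whiskerRight adjF.counit (hs ⋙ iStar)

namespace CategoryTheory.Adjunction

variable {A D E : Type*} [Category A] [Category D] [Category E]
  {L : D ⥤ E} {R : E ⥤ D}

theorem whiskerRight_homEquiv_apply (adj : L ⊣ R) {G : A ⥤ D} {H : A ⥤ E} (φ : G ⋙ L ⟶ H) :
    (adj.whiskerRight A).homEquiv G H φ =
      Functor.whiskerLeft G adj.unit ≫ Functor.whiskerRight φ R := by
  rw [homEquiv_unit]; ext; simp

end CategoryTheory.Adjunction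

open Functor

theorem whiskerRight_homEquiv_comp_bcR
    {CX CY DX DY A : Type*} [Category CX] [Category CY] [Category DX] [Category DY] [Category A]
    {fs : CX ⥤ CY} {dfs : DX ⥤ DY} {FX : CX ⥤ DX} {FY : CY ⥤ DY}
    {fStar : CY ⥤ CX} {dfStar : DY ⥤ DX}
    (adjfs : fs ⊣ fStar) (adjdfs : dfs ⊣ dfStar) (α : fs ⋙ FY ≅ FX ⋙ dfs)
    {G : A ⥤ CX} {H : A ⥤ CY} (φ : G ⋙ fs ⟶ H) :
    whiskerRight ((adjfs.whiskerRight A).homEquiv G H φ) FX ≫ whiskerLeft H (bcR adjfs adjdfs α) =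
      (adjdfs.whiskerRight A).homEquiv (G ⋙ FX) (H ⋙ FY)
        (whiskerLeft G α.inv ≫ whiskerRight φ FY) := by
  simp only [Adjunction.whiskerRight_homEquiv_apply]
  ext a
  simp only [bcR, whiskeringRight_obj_obj, NatTrans.comp_app, whiskerLeft_app, whiskerRight_app,
    Functor.comp_obj, Functor.id_obj, Functor.comp_map, Functor.map_comp, Category.assoc]
  rw [← FX.map_comp_assoc, ← adjdfs.unit_naturality_assoc, ← Functor.comp_map FX dfs,
    ← dfStar.map_comp, ← dfStar.map_comp, ← dfStar.map_comp, α.inv.naturality_assoc,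
    Functor.comp_map, ← FY.map_comp, fs.map_comp, Category.assoc, adjfs.counit_naturality,
    adjfs.left_triangle_components_assoc]

/-- Mate reduction of the norm square: the norm square
`BC_*[α] ∘ (F_X ◁ Nm_f) ∘ BC_![α] = Nm_{df} ▷ F_Y` commutes if and only if the
wrong-way-counit square `(F_Y ◁ ν) ∘ (α⁻¹ ▷ f_!) ∘ (df* ◁ BC_![α]) = dν ▷ F_Y`
commutes.  Here `Nm_f = (f_* ◁ ν) ∘ (η_* ▷ f_!)` and similarly for `Nm_{df}`. -/
theorem mate_reduction_of_norm_square
    {CX CY DX DY : Type*} [Category CX] [Category CY] [Category DX] [Category DY]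
    {fs : CX ⥤ CY} {dfs : DX ⥤ DY} {FX : CX ⥤ DX} {FY : CY ⥤ DY}
    {fShriek : CY ⥤ CX} {dfShriek : DY ⥤ DX} {fStar : CY ⥤ CX} {dfStar : DY ⥤ DX}
    (adjf : fShriek ⊣ fs) (adjdf : dfShriek ⊣ dfs)
    (adjfs : fs ⊣ fStar) (adjdfs : dfs ⊣ dfStar)
    (α : fs ⋙ FY ≅ FX ⋙ dfs)
    (ν : fShriek ⋙ fs ⟶ 𝟭 CY) (dν : dfShriek ⋙ dfs ⟶ 𝟭 DY)
    (Nmf : fShriek ⟶ fStar) (Nmdf : dfShriek ⟶ dfStar)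
    (hNmf : Nmf = Functor.whiskerLeft fShriek adjfs.unit ≫ Functor.whiskerRight ν fStar)
    (hNmdf : Nmdf = Functor.whiskerLeft dfShriek adjdfs.unit ≫ Functor.whiskerRight dν dfStar) :
    (bcL adjf adjdf α ≫ Functor.whiskerRight Nmf FX ≫ bcR adjfs adjdfs α =
        Functor.whiskerLeft FY Nmdf) ↔
      (Functor.whiskerRight (bcL adjf adjdf α) dfs ≫ Functor.whiskerLeft fShriek α.inv ≫
          Functor.whiskerRight ν FY =
        Functor.whiskerLeft FY dν) := by
  let transpose := (adjdfs.whiskerRight CY).homEquiv (FY ⋙ dfShriek) FY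
  have norm_eq : bcL adjf adjdf α ≫ whiskerRight Nmf FX ≫ bcR adjfs adjdfs α =
      transpose (whiskerRight (bcL adjf adjdf α) dfs ≫ whiskerLeft fShriek α.inv ≫
        whiskerRight ν FY) :=
    calc bcL adjf adjdf α ≫ whiskerRight Nmf FX ≫ bcR adjfs adjdfs α
        = bcL adjf adjdf α ≫ (whiskerRight ((adjfs.whiskerRight CY).homEquiv _ _ ν) FX ≫
            whiskerLeft (𝟭 CY) (bcR adjfs adjdfs α)) := by
          rw [hNmf, Adjunction.whiskerRight_homEquiv_apply]; rfl
      _ = _ := by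
          rw [whiskerRight_homEquiv_comp_bcR]
          exact ((adjdfs.whiskerRight CY).homEquiv_naturality_left _ _).symm
  have dnorm_eq : whiskerLeft FY Nmdf = transpose (whiskerLeft FY dν) := by
    rw [Adjunction.whiskerRight_homEquiv_apply, hNmdf]; rfl
  rw [norm_eq, dnorm_eq]
  exact transpose.apply_eq_iff_eq
end

section
/- Base case of the norm square theorem: In the norm square setup, suppose additionally that the unit η_f : id_{C_Y} ⟶ f* ∘ f_! of the adjunction f_! ⊣ f* and the unit η_{df} : id_{D_Y} ⟶ df* ∘ df_! of the adjunction df_! ⊣ df* are natural isomorphisms, and that ν = η_f⁻¹ and dν = η_{df}⁻¹. Then the wrong-way-counit square commutes: (F_Y whiskered on the left with ν) ∘ (α⁻¹ whiskered with f_! on the right) ∘ (df* whiskered on the left with BC_![α]) = dν whiskered with F_Y on the right, as natural transformations df* ∘ df_! ∘ F_Y ⟶ F_Y. -/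
open CategoryTheory

namespace CategoryTheory.Adjunction

theorem map_map_comp_counit_of_isIso_unit {C D : Type*} [Category C] [Category D]
    {L : C ⥤ D} {R : D ⥤ C} (adj : L ⊣ R) [IsIso adj.unit] {A : C} {X : D}
    (g : A ⟶ R.obj X) :
    R.map (L.map g ≫ adj.counit.app X) = inv (adj.unit.app A) ≫ g := by
  rw [IsIso.eq_inv_comp]
  simp

end CategoryTheory.Adjunction

theorem bcL_app {C D E F : Type*} [Category C] [Category D] [Category E] [Category F]
    {gs : C ⥤ D} {fs : C ⥤ E} {is : D ⥤ F} {hs : E ⥤ F}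
    {fShriek : E ⥤ C} {iShriek : F ⥤ D}
    (adjF : fShriek ⊣ fs) (adjI : iShriek ⊣ is) (α : fs ⋙ hs ≅ gs ⋙ is) (y : E) :
    (bcL adjF adjI α).app y =
      iShriek.map (hs.map (adjF.unit.app y) ≫ α.hom.app (fShriek.obj y)) ≫
        adjI.counit.app (gs.obj (fShriek.obj y)) := by
  simp [bcL]

/-- Base case of the norm square theorem: if the units `η_f` and `η_{df}` of the
adjunctions `f_! ⊣ f*` and `df_! ⊣ df*` are natural isomorphisms and the
wrong-way counits are their inverses, then the wrong-way-counit square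
`(F_Y ◁ ν) ∘ (α⁻¹ ▷ f_!) ∘ (df* ◁ BC_![α]) = dν ▷ F_Y` commutes. -/
theorem norm_square_base_case
    {CX CY DX DY : Type*} [Category CX] [Category CY] [Category DX] [Category DY]
    {fs : CX ⥤ CY} {dfs : DX ⥤ DY} {FX : CX ⥤ DX} {FY : CY ⥤ DY}
    {fShriek : CY ⥤ CX} {dfShriek : DY ⥤ DX}
    (adjf : fShriek ⊣ fs) (adjdf : dfShriek ⊣ dfs)
    (α : fs ⋙ FY ≅ FX ⋙ dfs)
    (ν : fShriek ⋙ fs ⟶ 𝟭 CY) (dν : dfShriek ⋙ dfs ⟶ 𝟭 DY)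
    [IsIso adjf.unit] [IsIso adjdf.unit]
    (hν : ν = inv adjf.unit) (hdν : dν = inv adjdf.unit) :
    Functor.whiskerRight (bcL adjf adjdf α) dfs ≫ Functor.whiskerLeft fShriek α.inv ≫
        Functor.whiskerRight ν FY =
      Functor.whiskerLeft FY dν := by
  subst hν hdν
  ext y
  simp only [NatTrans.comp_app, Functor.whiskerRight_app, Functor.whiskerLeft_app, bcL_app,
    adjdf.map_map_comp_counit_of_isIso_unit, NatIso.isIso_inv_app, Category.assoc,
    Iso.hom_inv_id_app_assoc]
  rw [← FY.map_comp, IsIso.hom_inv_id, FY.map_id]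
  exact Category.comp_id _
end

section
/- The right Beck–Chevalley transformation is invertible when the norm square commutes: In the norm square setup, suppose that BC_![α] is a natural isomorphism, that the norm maps Nm_f and Nm_{df} are natural isomorphisms, and that the norm square commutes, i.e. BC_*[α] ∘ (F_X whiskered on the left with Nm_f) ∘ BC_![α] = Nm_{df} whiskered with F_Y on the right. Then BC_*[α] is a natural isomorphism, and moreover F_X whiskered on the left with Nm_f is the inverse of the composite BC_![α] ∘ (Nm_{df}⁻¹ whiskered with F_Y on the right) ∘ BC_*[α]. -/
open CategoryTheory

/-
Once `BC_![α]` and `F_X ◁ Nm_f` are invertible, the commuting norm square solves for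
`BC_*[α] = (F_X ◁ Nm_f)⁻¹ ∘ BC_![α]⁻¹ ∘ (Nm_{df} ▷ F_Y)`, a composite of isomorphisms;
inverting the square then exhibits `F_X ◁ Nm_f` as the inverse of
`BC_![α] ∘ (Nm_{df}⁻¹ ▷ F_Y) ∘ BC_*[α]`.
-/

namespace CategoryTheory

variable {C : Type*} [Category C] {X Y Z W : C}
  {a : X ⟶ Y} {b : Y ⟶ Z} {c : Z ⟶ W} {d : X ⟶ W}

theorem inv_eq_of_comp_comp_eq [IsIso a] [IsIso b] [IsIso d] (h : a ≫ b ≫ c = d) :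
    inv b = c ≫ inv d ≫ a := by
  refine IsIso.inv_eq_of_hom_inv_id ?_
  rw [← cancel_epi a]
  simp [reassoc_of% h]

theorem IsIso.of_comp_comp_eq [IsIso a] [IsIso b] [IsIso d] (h : a ≫ b ≫ c = d) :
    IsIso c := by
  have : IsIso (a ≫ b ≫ c) := h ▸ inferInstance
  have : IsIso (b ≫ c) := IsIso.of_isIso_comp_left a (b ≫ c)
  exact IsIso.of_isIso_comp_left b c

end CategoryTheory

theorem bcR_isIso_of_norm_square_general
    {CX CY DX DY : Type*} [Category CX] [Category CY] [Category DX] [Category DY]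
    {fs : CX ⥤ CY} {dfs : DX ⥤ DY} {FX : CX ⥤ DX} {FY : CY ⥤ DY}
    {fShriek : CY ⥤ CX} {dfShriek : DY ⥤ DX} {fStar : CY ⥤ CX} {dfStar : DY ⥤ DX}
    (adjf : fShriek ⊣ fs) (adjdf : dfShriek ⊣ dfs)
    (adjfs : fs ⊣ fStar) (adjdfs : dfs ⊣ dfStar)
    (α : fs ⋙ FY ≅ FX ⋙ dfs)
    (Nmf : fShriek ⟶ fStar) (Nmdf : dfShriek ⟶ dfStar)
    [IsIso (bcL adjf adjdf α)] [IsIso Nmf] [IsIso Nmdf]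
    (hsq : bcL adjf adjdf α ≫ Functor.whiskerRight Nmf FX ≫ bcR adjfs adjdfs α =
      Functor.whiskerLeft FY Nmdf) :
    IsIso (bcR adjfs adjdfs α) ∧
      Functor.whiskerRight Nmf FX ≫
          (bcR adjfs adjdfs α ≫ Functor.whiskerLeft FY (inv Nmdf) ≫ bcL adjf adjdf α) =
        𝟙 (fShriek ⋙ FX) ∧
      (bcR adjfs adjdfs α ≫ Functor.whiskerLeft FY (inv Nmdf) ≫ bcL adjf adjdf α) ≫
          Functor.whiskerRight Nmf FX =
        𝟙 (fStar ⋙ FX) := by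
  rw [← Functor.inv_whiskerLeft, ← inv_eq_of_comp_comp_eq hsq]
  exact ⟨IsIso.of_comp_comp_eq hsq, IsIso.hom_inv_id _, IsIso.inv_hom_id _⟩

/-- If `BC_![α]`, `Nm_f` and `Nm_{df}` are natural isomorphisms and the norm
square `BC_*[α] ∘ (F_X ◁ Nm_f) ∘ BC_![α] = Nm_{df} ▷ F_Y` commutes, then
`BC_*[α]` is a natural isomorphism, and `F_X ◁ Nm_f` is (two-sidedly) the
inverse of the composite `BC_![α] ∘ (Nm_{df}⁻¹ ▷ F_Y) ∘ BC_*[α]`. -/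
theorem bcR_isIso_of_norm_square
    {CX CY DX DY : Type*} [Category CX] [Category CY] [Category DX] [Category DY]
    {fs : CX ⥤ CY} {dfs : DX ⥤ DY} {FX : CX ⥤ DX} {FY : CY ⥤ DY}
    {fShriek : CY ⥤ CX} {dfShriek : DY ⥤ DX} {fStar : CY ⥤ CX} {dfStar : DY ⥤ DX}
    (adjf : fShriek ⊣ fs) (adjdf : dfShriek ⊣ dfs)
    (adjfs : fs ⊣ fStar) (adjdfs : dfs ⊣ dfStar)
    (α : fs ⋙ FY ≅ FX ⋙ dfs)
    (ν : fShriek ⋙ fs ⟶ 𝟭 CY) (dν : dfShriek ⋙ dfs ⟶ 𝟭 DY)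
    (Nmf : fShriek ⟶ fStar) (Nmdf : dfShriek ⟶ dfStar)
    (hNmf : Nmf = Functor.whiskerLeft fShriek adjfs.unit ≫ Functor.whiskerRight ν fStar)
    (hNmdf : Nmdf = Functor.whiskerLeft dfShriek adjdfs.unit ≫ Functor.whiskerRight dν dfStar)
    [IsIso (bcL adjf adjdf α)] [IsIso Nmf] [IsIso Nmdf]
    (hsq : bcL adjf adjdf α ≫ Functor.whiskerRight Nmf FX ≫ bcR adjfs adjdfs α =
      Functor.whiskerLeft FY Nmdf) :
    IsIso (bcR adjfs adjdfs α) ∧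
      Functor.whiskerRight Nmf FX ≫
          (bcR adjfs adjdfs α ≫ Functor.whiskerLeft FY (inv Nmdf) ≫ bcL adjf adjdf α) =
        𝟙 (fShriek ⋙ FX) ∧
      (bcR adjfs adjdfs α ≫ Functor.whiskerLeft FY (inv Nmdf) ≫ bcL adjf adjdf α) ≫
          Functor.whiskerRight Nmf FX =
        𝟙 (fStar ⋙ FX) :=
  bcR_isIso_of_norm_square_general adjf adjdf adjfs adjdfs α Nmf Nmdf hsq
end

section
/- Wrong-way unit triangle from a commuting norm square (the inductive subdiagram of the norm square theorem): In the norm square setup, suppose additionally that there are adjunctions f* ⊣ f_! with unit μ : id_{C_X} ⟶ f_! ∘ f* and counit ν, and df* ⊣ df_! with unit dμ : id_{D_X} ⟶ df_! ∘ df* and counit dν (so ν and dν are genuine counits exhibiting f_! and df_! as right adjoints of f* and df*, i.e. f and df are 'ambidextrous'). Suppose BC_![α] is a natural isomorphism, the norm maps Nm_f and Nm_{df} are natural isomorphisms, and the norm square commutes: BC_*[α] ∘ (F_X whiskered on the left with Nm_f) ∘ BC_![α] = Nm_{df} whiskered with F_Y on the right. Then the wrong-way unit triangle commutes: (BC_![α]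 whiskered with f* on the right) ∘ (df_! whiskered on the left with α⁻¹) ∘ (dμ whiskered with F_X on the right) = F_X whiskered on the left with μ, as natural transformations F_X ⟶ F_X ∘ f_! ∘ f*. -/
open CategoryTheory

/-! Transposing the norm square along `df* ⊣ df_*` turns `Nm_f` and `Nm_{df}` into `ν` and `dν`,
and `BC_*[α]` into `α⁻¹` followed by the counit of `f* ⊣ f_*`; so the norm square says that
`BC_![α]` intertwines the wrong-way counits `ν` and `dν`. When `ν` and `dν` are the counits of
`f* ⊣ f_!` and `df* ⊣ df_!` and `BC_![α]` is invertible, this counit square is the mate of the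
wrong-way unit triangle: after moving `BC_![α]` to the other side, both sides of the triangle
transpose along `df* ⊣ df_!` to `α⁻¹`. -/

namespace CategoryTheory

section Norm

variable {C D : Type*} [Category C] [Category D] {L : C ⥤ D} {R K : D ⥤ C}

def normMap (adj : L ⊣ R) (ν : K ⋙ L ⟶ 𝟭 D) : K ⟶ R :=
  Functor.whiskerLeft K adj.unit ≫ Functor.whiskerRight ν R

lemma map_normMap_app_comp_counit (adj : L ⊣ R) (ν : K ⋙ L ⟶ 𝟭 D) (Y : D) :
    L.map ((normMap adj ν).app Y) ≫ adj.counit.app Y = ν.app Y := by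
  simp [normMap]

end Norm

lemma map_bcR_app_comp_counit {C D E F : Type*} [Category C] [Category D] [Category E]
    [Category F] {gs : C ⥤ D} {fs : C ⥤ E} {is : D ⥤ F} {hs : E ⥤ F}
    {fStar : E ⥤ C} {iStar : F ⥤ D} (adjF : fs ⊣ fStar) (adjI : is ⊣ iStar)
    (α : fs ⋙ hs ≅ gs ⋙ is) (Y : E) :
    is.map ((bcR adjF adjI α).app Y) ≫ adjI.counit.app (hs.obj Y) =
      α.inv.app (fStar.obj Y) ≫ hs.map (adjF.counit.app Y) := by
  simp [bcR]

section WrongWay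

variable {CX CY DX DY : Type*} [Category CX] [Category CY] [Category DX] [Category DY]
    {fs : CX ⥤ CY} {dfs : DX ⥤ DY} {FX : CX ⥤ DX} {FY : CY ⥤ DY}
    {fShriek : CY ⥤ CX} {dfShriek : DY ⥤ DX}
    (adjf : fShriek ⊣ fs) (adjdf : dfShriek ⊣ dfs) (α : fs ⋙ FY ≅ FX ⋙ dfs)

lemma wrong_way_counit_square_of_norm_square {fStar : CY ⥤ CX} {dfStar : DY ⥤ DX}
    (adjfs : fs ⊣ fStar) (adjdfs : dfs ⊣ dfStar)
    (ν : fShriek ⋙ fs ⟶ 𝟭 CY) (dν : dfShriek ⋙ dfs ⟶ 𝟭 DY)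
    (hsq : bcL adjf adjdf α ≫ Functor.whiskerRight (normMap adjfs ν) FX ≫
      bcR adjfs adjdfs α = Functor.whiskerLeft FY (normMap adjdfs dν)) (Y : CY) :
    dfs.map ((bcL adjf adjdf α).app Y) ≫ α.inv.app (fShriek.obj Y) ≫ FY.map (ν.app Y) =
      dν.app (FY.obj Y) := by
  have hsqY := congrArg (fun t => dfs.map (t.app Y) ≫ adjdfs.counit.app (FY.obj Y)) hsq
  simp only [NatTrans.comp_app, Functor.whiskerRight_app, Functor.whiskerLeft_app,
    Functor.map_comp, Category.assoc, map_bcR_app_comp_counit, map_normMap_app_comp_counit]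
    at hsqY
  rw [← hsqY, ← map_normMap_app_comp_counit adjfs ν Y, FY.map_comp]
  exact congrArg _ (α.inv.naturality_assoc _ _).symm

lemma wrong_way_unit_triangle_of_counit_square (adjamb : fs ⊣ fShriek)
    (adjdamb : dfs ⊣ dfShriek) [IsIso (bcL adjf adjdf α)]
    (hcounit : ∀ Y, dfs.map ((bcL adjf adjdf α).app Y) ≫ α.inv.app (fShriek.obj Y) ≫
      FY.map (adjamb.counit.app Y) = adjdamb.counit.app (FY.obj Y)) :
    Functor.whiskerLeft FX adjdamb.unit ≫ Functor.whiskerRight α.inv dfShriek ≫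
        Functor.whiskerLeft fs (bcL adjf adjdf α) =
      Functor.whiskerRight adjamb.unit FX := by
  ext X
  have hinv : dfs.map (inv ((bcL adjf adjdf α).app (fs.obj X))) ≫
      adjdamb.counit.app ((fs ⋙ FY).obj X) =
      α.inv.app (fShriek.obj (fs.obj X)) ≫ FY.map (adjamb.counit.app (fs.obj X)) := by
    rw [Functor.map_inv, IsIso.inv_comp_eq, hcounit]
    rfl
  simp only [NatTrans.comp_app, Functor.whiskerLeft_app, Functor.whiskerRight_app]
  rw [← Category.assoc, ← IsIso.eq_comp_inv]
  apply (adjdamb.homEquiv _ _).symm.injective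
  simp only [Adjunction.homEquiv_counit, Functor.map_comp, Category.assoc, hinv]
  trans α.inv.app X
  · simp
  · calc α.inv.app X
        _ = α.inv.app X ≫ FY.map (fs.map (adjamb.unit.app X)) ≫
              FY.map (adjamb.counit.app (fs.obj X)) := by
          simp [← FY.map_comp]
        _ = _ := (α.inv.naturality_assoc _ _).symm

end WrongWay

end CategoryTheory

theorem wrong_way_unit_triangle_of_norm_square_general
    {CX CY DX DY : Type*} [Category CX] [Category CY] [Category DX] [Category DY]
    {fs : CX ⥤ CY} {dfs : DX ⥤ DY} {FX : CX ⥤ DX} {FY : CY ⥤ DY}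
    {fShriek : CY ⥤ CX} {dfShriek : DY ⥤ DX} {fStar : CY ⥤ CX} {dfStar : DY ⥤ DX}
    (adjf : fShriek ⊣ fs) (adjdf : dfShriek ⊣ dfs)
    (adjfs : fs ⊣ fStar) (adjdfs : dfs ⊣ dfStar)
    (α : fs ⋙ FY ≅ FX ⋙ dfs)
    (ν : fShriek ⋙ fs ⟶ 𝟭 CY) (dν : dfShriek ⋙ dfs ⟶ 𝟭 DY)
    -- `f` and `df` are ambidextrous: `ν` and `dν` are genuine counits of
    -- adjunctions `f* ⊣ f_!` and `df* ⊣ df_!`.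
    (adjamb : fs ⊣ fShriek) (adjdamb : dfs ⊣ dfShriek)
    (hν : adjamb.counit = ν) (hdν : adjdamb.counit = dν)
    (Nmf : fShriek ⟶ fStar) (Nmdf : dfShriek ⟶ dfStar)
    (hNmf : Nmf = Functor.whiskerLeft fShriek adjfs.unit ≫ Functor.whiskerRight ν fStar)
    (hNmdf : Nmdf = Functor.whiskerLeft dfShriek adjdfs.unit ≫ Functor.whiskerRight dν dfStar)
    [IsIso (bcL adjf adjdf α)]
    (hsq : bcL adjf adjdf α ≫ Functor.whiskerRight Nmf FX ≫ bcR adjfs adjdfs α =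
      Functor.whiskerLeft FY Nmdf) :
    Functor.whiskerLeft FX adjdamb.unit ≫ Functor.whiskerRight α.inv dfShriek ≫
        Functor.whiskerLeft fs (bcL adjf adjdf α) =
      Functor.whiskerRight adjamb.unit FX := by
  subst hν hdν hNmf hNmdf
  exact wrong_way_unit_triangle_of_counit_square adjf adjdf α adjamb adjdamb
    (wrong_way_counit_square_of_norm_square adjf adjdf α adjfs adjdfs _ _ hsq)

/-- Wrong-way unit triangle from a commuting norm square: suppose in addition to
the norm square setup that there are adjunctions `f* ⊣ f_!` (with unit `μ` and
counit `ν`) and `df* ⊣ df_!` (with unit `dμ` and counit `dν`), that `BC_![α]`,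
`Nm_f` and `Nm_{df}` are natural isomorphisms, and that the norm square
commutes.  Then `(BC_![α] ▷ f*) ∘ (df_! ◁ α⁻¹) ∘ (dμ ▷ F_X) = F_X ◁ μ` as
natural transformations `F_X ⟶ F_X ∘ f_! ∘ f*`. -/
theorem wrong_way_unit_triangle_of_norm_square
    {CX CY DX DY : Type*} [Category CX] [Category CY] [Category DX] [Category DY]
    {fs : CX ⥤ CY} {dfs : DX ⥤ DY} {FX : CX ⥤ DX} {FY : CY ⥤ DY}
    {fShriek : CY ⥤ CX} {dfShriek : DY ⥤ DX} {fStar : CY ⥤ CX} {dfStar : DY ⥤ DX}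
    (adjf : fShriek ⊣ fs) (adjdf : dfShriek ⊣ dfs)
    (adjfs : fs ⊣ fStar) (adjdfs : dfs ⊣ dfStar)
    (α : fs ⋙ FY ≅ FX ⋙ dfs)
    (ν : fShriek ⋙ fs ⟶ 𝟭 CY) (dν : dfShriek ⋙ dfs ⟶ 𝟭 DY)
    -- `f` and `df` are ambidextrous: `ν` and `dν` are genuine counits of
    -- adjunctions `f* ⊣ f_!` and `df* ⊣ df_!`.
    (adjamb : fs ⊣ fShriek) (adjdamb : dfs ⊣ dfShriek)
    (hν : adjamb.counit = ν) (hdν : adjdamb.counit = dν)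
    (Nmf : fShriek ⟶ fStar) (Nmdf : dfShriek ⟶ dfStar)
    (hNmf : Nmf = Functor.whiskerLeft fShriek adjfs.unit ≫ Functor.whiskerRight ν fStar)
    (hNmdf : Nmdf = Functor.whiskerLeft dfShriek adjdfs.unit ≫ Functor.whiskerRight dν dfStar)
    [IsIso (bcL adjf adjdf α)] [IsIso Nmf] [IsIso Nmdf]
    (hsq : bcL adjf adjdf α ≫ Functor.whiskerRight Nmf FX ≫ bcR adjfs adjdfs α =
      Functor.whiskerLeft FY Nmdf) :
    Functor.whiskerLeft FX adjdamb.unit ≫ Functor.whiskerRight α.inv dfShriek ≫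
        Functor.whiskerLeft fs (bcL adjf adjdf α) =
      Functor.whiskerRight adjamb.unit FX :=
  wrong_way_unit_triangle_of_norm_square_general adjf adjdf adjfs adjdfs α ν dν adjamb adjdamb hν
    hdν Nmf Nmdf hNmf hNmdf hsq
end
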